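/- arXiv:1405.7443 — 3 statements merged into one kernel-verified Lean document; each statement's English description precedes it below -/
import Mathlib

section
/- Nonalgebraicity of μ-nonforking: If p ∈ S(N) does not μ-fork over M (with M ≤ N in K_μ) and p ↾ M is not algebraic, then p is not algebraic. -/
/-!
Abstract framework: an axiomatic presentation of an abstract elementary class (AEC)
together with its Galois types, K-embeddings, isomorphisms, universal extensions,
limit models, splitting/forking data and pre-frames, following
"Building independence relations in abstract elementary classes" (Vasey).
-/

universe u

/-- An axiomatic presentation of an abstract elementary class `K`, together with its
Galois types.  `le` is the strong substructure relation `≤` of the AEC, `Emb M N`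
(resp. `EmbOver M₀ M N`) asserts the existence of a `K`-embedding of `M` into `N`
(resp. one fixing `M₀` pointwise), `S M` is the set of Galois types of single elements
over `M`, `restrict` is restriction of types, and `tp h a` is the Galois type
`gtp (a / M; N)` of `a ∈ N` over `M ≤ N`.  `Sp M` (resp. `Sq M`) is the set of Galois
types of pairs (resp. of pairs of pairs, i.e. 4-tuples) over `M`. -/
structure AEC : Type (u + 2) where
  Model : Type (u + 1)
  carrier : Model → Type u
  le : Model → Model → Prop
  le_refl : ∀ M, le M M
  le_trans : ∀ {M N P : Model}, le M N → le N P → le M P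
  le_antisymm : ∀ {M N : Model}, le M N → le N M → M = N
  /-- the inclusion of carriers along `≤` -/
  incl : ∀ {M N : Model}, le M N → carrier M → carrier N
  /-- the Löwenheim–Skolem number `LS (K)` -/
  LS : Cardinal.{u}
  aleph0_le_LS : Cardinal.aleph0 ≤ LS
  /-- downward Löwenheim–Skolem axiom -/
  dls : ∀ (M : Model) (c : Cardinal.{u}), LS ≤ c → c ≤ Cardinal.mk (carrier M) →
    ∃ M' : Model, le M' M ∧ Cardinal.mk (carrier M') = c
  /-- `EmbOver M₀ M N`: there is a `K`-embedding `f : M → N` over `M₀` -/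
  EmbOver : Model → Model → Model → Prop
  /-- `Emb M N`: there is a `K`-embedding `f : M → N` -/
  Emb : Model → Model → Prop
  emb_of_le : ∀ {M N : Model}, le M N → Emb M N
  emb_trans : ∀ {M N P : Model}, Emb M N → Emb N P → Emb M P
  embOver_of_le : ∀ {M₀ M N : Model}, le M₀ M → le M N → EmbOver M₀ M N
  embOver_le : ∀ {M₀ M N N' : Model}, EmbOver M₀ M N → le N N' → EmbOver M₀ M N'
  emb_of_embOver : ∀ {M₀ M N : Model}, EmbOver M₀ M N → Emb M N
  /-- `Iso M N`: `M` and `N` are isomorphic -/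
  Iso : Model → Model → Prop
  iso_refl : ∀ M, Iso M M
  iso_symm : ∀ {M N : Model}, Iso M N → Iso N M
  /-- Galois types of single elements over `M` -/
  S : Model → Type u
  restrict : ∀ {M N : Model}, le M N → S N → S M
  tp : ∀ {M N : Model}, le M N → carrier N → S M
  restrict_tp : ∀ {M M' N : Model} (h : le M M') (h' : le M' N) (a : carrier N),
    restrict h (tp h' a) = tp (le_trans h h') a
  restrict_restrict : ∀ {M M' N : Model} (h : le M M') (h' : le M' N) (p : S N),
    restrict h (restrict h' p) = restrict (le_trans h h') p
  /-- Galois types of pairs over `M` -/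
  Sp : Model → Type u
  tpPair : ∀ {M N : Model}, le M N → carrier N × carrier N → Sp M
  /-- Galois types of 4-tuples (pairs of pairs) over `M` -/
  Sq : Model → Type u
  tpPairPair : ∀ {M N : Model}, le M N → carrier N × carrier N → carrier N × carrier N → Sq M

/-- `F` is an interval of cardinals of the form `[lam, θ)` with minimum `lam`. -/
def CardinalInterval (F : Set Cardinal.{u}) (lam : Cardinal.{u}) : Prop :=
  lam ∈ F ∧ (∀ c ∈ F, lam ≤ c) ∧ ∀ ⦃c c' : Cardinal.{u}⦄, c ∈ F → lam ≤ c' → c' ≤ c → c' ∈ F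

namespace AEC

variable (K : AEC.{u})

/-- The cardinality `‖M‖` of a model. -/
def card (M : K.Model) : Cardinal.{u} := Cardinal.mk (K.carrier M)

/-- `M < N`: strict strong substructure. -/
def lt (M N : K.Model) : Prop := K.le M N ∧ M ≠ N

/-- `N` is universal over `M`: `M < N` and every extension `M'` of `M` with
`‖M'‖ = ‖M‖` embeds into `N` over `M`. -/
def UnivOver (N M : K.Model) : Prop :=
  K.lt M N ∧ ∀ M' : K.Model, K.le M M' → K.card M' = K.card M → K.EmbOver M M' N

/-- `K_F` has amalgamation. -/
def Amalgamation (F : Set Cardinal.{u}) : Prop :=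
  ∀ M₀ M₁ M₂ : K.Model, K.card M₀ ∈ F → K.card M₁ ∈ F → K.card M₂ ∈ F →
    K.le M₀ M₁ → K.le M₀ M₂ →
    ∃ N : K.Model, K.card N ∈ F ∧ K.EmbOver M₀ M₁ N ∧ K.EmbOver M₀ M₂ N

/-- `K_F` has joint embedding. -/
def JointEmbedding (F : Set Cardinal.{u}) : Prop :=
  ∀ M₁ M₂ : K.Model, K.card M₁ ∈ F → K.card M₂ ∈ F →
    ∃ N : K.Model, K.card N ∈ F ∧ K.Emb M₁ N ∧ K.Emb M₂ N

/-- `K_F` has no maximal models. -/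
def NoMaxModels (F : Set Cardinal.{u}) : Prop :=
  ∀ M : K.Model, K.card M ∈ F → ∃ N : K.Model, K.card N ∈ F ∧ K.lt M N

/-- A type `p ∈ S (N)` is algebraic if it is realized by an element of `N`. -/
def Algebraic {N : K.Model} (p : K.S N) : Prop :=
  ∃ a : K.carrier N, K.tp (K.le_refl N) a = p

/-- `K` is stable in `c`: `|S (M)| ≤ c` for every `M` of size `c`. -/
def Stable (c : Cardinal.{u}) : Prop :=
  ∀ M : K.Model, K.card M = c → Cardinal.mk (K.S M) ≤ c

/-- `K` is 2-stable in `c`: `|S² (M)| ≤ c` for every `M` of size `c`. -/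
def Stable2 (c : Cardinal.{u}) : Prop :=
  ∀ M : K.Model, K.card M = c → Cardinal.mk (K.Sp M) ≤ c

/-- `M` is `μ⁺`-model-homogeneous: every `M₀ ≤ M` with `‖M₀‖ ≤ μ` has `M`
universal over it. -/
def MHomog (μ : Cardinal.{u}) (M : K.Model) : Prop :=
  ∀ M₀ : K.Model, K.le M₀ M → K.card M₀ ≤ μ → K.UnivOver M M₀

/-- `N` is `(μ, δ)`-limit over `M`: there is a `<_univ`-increasing chain
`(M_i)_{i ≤ δ}` in `K_μ` with `M_0 = M`, `M_δ = N`, continuous at `δ` if `δ` is limit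
(the union condition is expressed by `f δ` being a least upper bound of the chain). -/
def IsLimitOver (μ : Cardinal.{u}) (δ : Ordinal.{u}) (N M : K.Model) : Prop :=
  K.card M = μ ∧ K.card N = μ ∧
  ∃ f : Ordinal.{u} → K.Model,
    f 0 = M ∧ f δ = N ∧
    (∀ i, i ≤ δ → K.card (f i) = μ) ∧
    (∀ i j, i < j → j ≤ δ → K.le (f i) (f j)) ∧
    (∀ i, i + 1 ≤ δ → K.UnivOver (f (i + 1)) (f i)) ∧
    (Order.IsSuccLimit δ → ∀ P : K.Model, (∀ i, i < δ → K.le (f i) P) → K.le (f δ) P)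

/-- `K` is `(μ, lamt)`-tame: distinct types over a model of size `≤ lamt` differ on
some `≤`-substructure of size `≤ μ`. -/
def Tame (μ lamt : Cardinal.{u}) : Prop :=
  ∀ M : K.Model, K.card M ≤ lamt → ∀ p q : K.S M, p ≠ q →
    ∃ (M₀ : K.Model) (h : K.le M₀ M), K.card M₀ ≤ μ ∧ K.restrict h p ≠ K.restrict h q

section Forking

variable (NoSplit : Cardinal.{u} → (M N : K.Model) → K.S N → Prop)

/-- `p ∈ S (N)` explicitly does not `μ`-fork over `(M₀, M)`:
`M₀ <_univ M ≤ N`, `M₀, M ∈ K_μ`, and `p` does not `μ`-split over `M₀`.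
Here `NoSplit μ M₀ N p` means "`p ∈ S (N)` does not `μ`-split over `M₀`". -/
def ExpNF (μ : Cardinal.{u}) (M₀ M N : K.Model) (p : K.S N) : Prop :=
  K.card M₀ = μ ∧ K.card M = μ ∧ K.UnivOver M M₀ ∧ K.le M N ∧ NoSplit μ M₀ N p

/-- `p ∈ S (N)` does not `μ`-fork over `M`: it explicitly does not `μ`-fork over
`(M₀, M)` for some `M₀`. -/
def NFork (μ : Cardinal.{u}) (M N : K.Model) (p : K.S N) : Prop :=
  ∃ M₀ : K.Model, K.ExpNF NoSplit μ M₀ M N p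

/-- `p ∈ S^{na} (N)` does not `(≥ μ)`-fork over `M`: there is `M' ≤ M` of size `μ`
such that for every `N' ∈ K_μ` with `M' ≤ N' ≤ N`, `p ↾ N'` does not `μ`-fork over
`M'`.  (This is only defined for nonalgebraic types.) -/
def GeNF (μ : Cardinal.{u}) (M N : K.Model) (p : K.S N) : Prop :=
  K.le M N ∧ ¬ K.Algebraic p ∧
  ∃ M' : K.Model, K.le M' M ∧ K.card M' = μ ∧
    ∀ (N' : K.Model) (hN' : K.le N' N), K.le M' N' → K.card N' = μ →
      K.NFork NoSplit μ M' N' (K.restrict hN' p)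

end Forking

/-- `K` has the `(2, χ)`-order property of length `γ`. -/
def HasOP2 (χ : Cardinal.{u}) (γ : Ordinal.{u}) : Prop :=
  ∃ (M N : K.Model) (h : K.le M N) (a : Ordinal.{u} → K.carrier N × K.carrier N),
    K.card M ≤ χ ∧
    ∀ i₀ i₁ j₀ j₁ : Ordinal.{u}, i₀ < i₁ → i₁ < γ → j₀ < j₁ → j₁ < γ →
      K.tpPairPair h (a i₀) (a i₁) ≠ K.tpPairPair h (a j₁) (a j₀)

end AEC

/-- A pre-`F`-frame `s = (K, ⌣, S^{bs})`: a class of basic (nonalgebraic) types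
together with an abstract nonforking relation `NF M₀ N p` ("`p ∈ S (N)` does not
`s`-fork over `M₀`") satisfying invariance (built into the type-based presentation),
monotonicity, and "nonforking types are basic". -/
structure PreFrame (K : AEC.{u}) (F : Set Cardinal.{u}) where
  Basic : (M : K.Model) → K.S M → Prop
  NF : (M₀ N : K.Model) → K.S N → Prop
  nf_le : ∀ {M₀ N : K.Model} {p : K.S N}, NF M₀ N p → K.le M₀ N
  nf_card : ∀ {M₀ N : K.Model} {p : K.S N}, NF M₀ N p → K.card M₀ ∈ F ∧ K.card N ∈ F
  basic_nonalg : ∀ {M : K.Model} {p : K.S M}, Basic M p → ¬ K.Algebraic p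
  monotonicity : ∀ {M₀ M₁ N₁ N : K.Model} (h01 : K.le M₀ M₁) (h1 : K.le M₁ N₁)
    (hN : K.le N₁ N) {p : K.S N}, K.card M₁ ∈ F → K.card N₁ ∈ F →
    NF M₀ N p → NF M₁ N₁ (K.restrict hN p)
  nf_basic : ∀ {M : K.Model} {p : K.S M}, NF M M p → Basic M p

namespace PreFrame

variable {K : AEC.{u}} {F : Set Cardinal.{u}} (s : PreFrame K F)

/-- Uniqueness of nonforking extensions. -/
def Uniqueness : Prop :=
  ∀ (M N : K.Model) (h : K.le M N) (p q : K.S N),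
    s.NF M N p → s.NF M N q → K.restrict h p = K.restrict h q → p = q

/-- Existence: basic types do not fork over their own domain. -/
def Existence : Prop := ∀ (M : K.Model) (p : K.S M), s.Basic M p → s.NF M M p

/-- Extension of nonforking types. -/
def Extension : Prop :=
  ∀ (M N N' : K.Model) (h : K.le N N') (p : K.S N), K.card N' ∈ F →
    s.NF M N p → ∃ q : K.S N', K.restrict h q = p ∧ s.NF M N' q

/-- Transitivity of nonforking. -/
def Transitivity : Prop :=
  ∀ (M₀ M₁ M₂ : K.Model) (h01 : K.le M₀ M₁) (h12 : K.le M₁ M₂) (p : K.S M₂),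
    s.NF M₁ M₂ p → s.NF M₀ M₁ (K.restrict h12 p) → s.NF M₀ M₂ p

/-- Local character: over the union of an increasing chain in `K_F`, every basic type
does not fork over some member of the chain.  The union of the chain is presented as
a least upper bound. -/
def LocalChar : Prop :=
  ∀ (δ : Ordinal.{u}), Order.IsSuccLimit δ → ∀ f : Ordinal.{u} → K.Model,
    (∀ i, i ≤ δ → K.card (f i) ∈ F) →
    (∀ i j, i < j → j ≤ δ → K.le (f i) (f j)) →
    (∀ P : K.Model, (∀ i, i < δ → K.le (f i) P) → K.le (f δ) P) →
    ∀ p : K.S (f δ), s.Basic (f δ) p → ∃ i, i < δ ∧ s.NF (f i) (f δ) p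

/-- Continuity of nonforking along increasing chains in `K_F`. -/
def Continuity : Prop :=
  ∀ (δ : Ordinal.{u}), Order.IsSuccLimit δ → ∀ f : Ordinal.{u} → K.Model,
    (∀ i, i ≤ δ → K.card (f i) ∈ F) →
    (∀ i j, i < j → j ≤ δ → K.le (f i) (f j)) →
    (∀ P : K.Model, (∀ i, i < δ → K.le (f i) P) → K.le (f δ) P) →
    ∀ p : K.S (f δ),
      (∀ i (hi : i < δ) (hle : K.le (f i) (f δ)), s.NF (f 0) (f i) (K.restrict hle p)) →
      s.NF (f 0) (f δ) p

/-- Density of basic types. -/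
def Density : Prop :=
  ∀ (M N : K.Model) (h : K.le M N), K.card M ∈ F → K.card N ∈ F → K.lt M N →
    ∃ a : K.carrier N, s.Basic M (K.tp h a)

/-- bs-stability: `|S^{bs} (M)| ≤ ‖M‖` for `M ∈ K_F`. -/
def BsStable : Prop :=
  ∀ M : K.Model, K.card M ∈ F → Cardinal.mk {p : K.S M // s.Basic M p} ≤ K.card M

/-- The symmetry property of the frame. -/
def Symmetry : Prop :=
  ∀ (M₀ M₂ N : K.Model) (h02 : K.le M₀ M₂) (h2N : K.le M₂ N)
    (a₁ : K.carrier N) (a₂ : K.carrier M₂),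
    s.NF M₀ M₂ (K.tp h2N a₁) → s.Basic M₀ (K.tp h02 a₂) →
    ∃ (M₁ N' : K.Model) (h01 : K.le M₀ M₁) (hNN' : K.le N N') (h1N' : K.le M₁ N'),
      (∃ b : K.carrier M₁, K.incl h1N' b = K.incl hNN' a₁) ∧
      s.NF M₀ M₁ (K.tp h1N' (K.incl hNN' (K.incl h2N a₂)))

/-- A good⁻ `F`-frame: all the properties of a good frame except possibly symmetry
and bs-stability. -/
def GoodMinus : Prop :=
  K.Amalgamation F ∧ K.JointEmbedding F ∧ K.NoMaxModels F ∧
  s.Density ∧ s.Existence ∧ s.Extension ∧ s.Uniqueness ∧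
  s.LocalChar ∧ s.Continuity ∧ s.Transitivity

end PreFrame

/- By weak uniqueness, `p` is the only extension of `p ↾ M` to `N` that does not split over
`M₀`, and weak extension provides such an extension that is still nonalgebraic. -/
theorem nonalgebraicity_of_nonforking_general (K : AEC.{u}) (μ : Cardinal.{u})
    (NoSplit : Cardinal.{u} → (M N : K.Model) → K.S N → Prop)
    (split_mono : ∀ (M₀ M₀' N' N : K.Model) (h0 : K.le M₀ M₀') (h0' : K.le M₀' N')
      (hN : K.le N' N) (p : K.S N),
      NoSplit μ M₀ N p → NoSplit μ M₀' N' (K.restrict hN p))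
    (weak_uniqueness : ∀ (M₀ M N : K.Model) (hMN : K.le M N),
      K.card M₀ = μ → K.card M = μ → K.card N = μ → K.UnivOver M M₀ →
      ∀ p₁ p₂ : K.S N, NoSplit μ M₀ N p₁ → NoSplit μ M₀ N p₂ →
      K.restrict hMN p₁ = K.restrict hMN p₂ → p₁ = p₂)
    (weak_extension : ∀ (M₀ M N : K.Model) (hMN : K.le M N),
      K.card M₀ = μ → K.card M = μ → K.card N = μ → K.UnivOver M M₀ →
      ∀ p : K.S M, NoSplit μ M₀ M p →
      ∃ q : K.S N, K.restrict hMN q = p ∧ NoSplit μ M₀ N q ∧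
        (¬ K.Algebraic p → ¬ K.Algebraic q))
    (M N : K.Model) (hMN : K.le M N) (cM : K.card M = μ) (cN : K.card N = μ)
    (p : K.S N)
    (hnf : K.NFork NoSplit μ M N p)
    (hna : ¬ K.Algebraic (K.restrict hMN p)) :
    ¬ K.Algebraic p := by
  obtain ⟨M₀, cM₀, -, hM₀M, -, hp⟩ := hnf
  have hpM : NoSplit μ M₀ M (K.restrict hMN p) :=
    split_mono M₀ M₀ M N (K.le_refl M₀) hM₀M.1.1 hMN p hp
  obtain ⟨q, hqp, hq, hq_nonalg⟩ := weak_extension M₀ M N hMN cM₀ cM cN hM₀M _ hpM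
  have hq_eq : q = p := weak_uniqueness M₀ M N hMN cM₀ cM cN hM₀M q p hq hp hqp
  exact hq_eq ▸ hq_nonalg hna

/-- Nonalgebraicity of `μ`-nonforking: if `p ∈ S (N)` does not
`μ`-fork over `M` (with `M ≤ N` in `K_μ`) and `p ↾ M` is not algebraic, then `p` is
not algebraic.  Weak uniqueness and weak extension of nonsplitting (the latter
preserving nonalgebraicity), as well as monotonicity of nonsplitting, are assumed. -/
theorem nonalgebraicity_of_nonforking (K : AEC.{u}) (μ : Cardinal.{u}) (hμ : K.LS ≤ μ)
    (NoSplit : Cardinal.{u} → (M N : K.Model) → K.S N → Prop)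
    (hamalg : K.Amalgamation {μ})
    (split_mono : ∀ (M₀ M₀' N' N : K.Model) (h0 : K.le M₀ M₀') (h0' : K.le M₀' N')
      (hN : K.le N' N) (p : K.S N),
      NoSplit μ M₀ N p → NoSplit μ M₀' N' (K.restrict hN p))
    (weak_uniqueness : ∀ (M₀ M N : K.Model) (hMN : K.le M N),
      K.card M₀ = μ → K.card M = μ → K.card N = μ → K.UnivOver M M₀ →
      ∀ p₁ p₂ : K.S N, NoSplit μ M₀ N p₁ → NoSplit μ M₀ N p₂ →
      K.restrict hMN p₁ = K.restrict hMN p₂ → p₁ = p₂)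
    (weak_extension : ∀ (M₀ M N : K.Model) (hMN : K.le M N),
      K.card M₀ = μ → K.card M = μ → K.card N = μ → K.UnivOver M M₀ →
      ∀ p : K.S M, NoSplit μ M₀ M p →
      ∃ q : K.S N, K.restrict hMN q = p ∧ NoSplit μ M₀ N q ∧
        (¬ K.Algebraic p → ¬ K.Algebraic q))
    (M N : K.Model) (hMN : K.le M N) (cM : K.card M = μ) (cN : K.card N = μ)
    (p : K.S N)
    (hnf : K.NFork NoSplit μ M N p)
    (hna : ¬ K.Algebraic (K.restrict hMN p)) :
    ¬ K.Algebraic p :=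
  nonalgebraicity_of_nonforking_general K μ NoSplit split_mono weak_uniqueness weak_extension M N
    hMN cM cN p hnf hna
end

section
/- Transitivity of explicit μ-nonforking: If M₁ ≤ M₂ ≤ M₃ in K_μ, p ∈ S(M₃), p ↾ M₂ explicitly does not μ-fork over (M₀, M₁), and p explicitly does not μ-fork over (M₀', M₂) for some M₀' ≥ M₀, then p explicitly does not μ-fork over (M₀, M₁). -/
/-!
Abstract framework: an axiomatic presentation of an abstract elementary class (AEC)
together with its Galois types, K-embeddings, isomorphisms, universal extensions,
limit models, splitting/forking data and pre-frames, following
"Building independence relations in abstract elementary classes" (Vasey).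
-/

universe u

/-!
An explicitly nonforking type has a nonsplitting extension to `M₃` (weak extension from
`M₁`, then weak uniqueness over `(M₀, M₁)` shows it still extends `p ↾ M₂`).  That extension
also does not split over the larger base `M₀'`, so weak uniqueness over `(M₀', M₂)` makes it
equal to `p`.
-/

namespace AEC

variable {K : AEC.{u}} {μ : Cardinal.{u}}

section Splitting

variable (K μ)
variable (NoSplit : Cardinal.{u} → (M N : K.Model) → K.S N → Prop)

def NoSplitMono : Prop :=
  ∀ (M₀ M₀' N' N : K.Model) (_ : K.le M₀ M₀') (_ : K.le M₀' N') (hN : K.le N' N) (p : K.S N),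
    NoSplit μ M₀ N p → NoSplit μ M₀' N' (K.restrict hN p)

def NoSplitWeakUniqueness : Prop :=
  ∀ (M₀ M N : K.Model) (hMN : K.le M N),
    K.card M₀ = μ → K.card M = μ → K.card N = μ → K.UnivOver M M₀ →
    ∀ p₁ p₂ : K.S N, NoSplit μ M₀ N p₁ → NoSplit μ M₀ N p₂ →
    K.restrict hMN p₁ = K.restrict hMN p₂ → p₁ = p₂

def NoSplitWeakExtension : Prop :=
  ∀ (M₀ M N : K.Model) (hMN : K.le M N),
    K.card M₀ = μ → K.card M = μ → K.card N = μ → K.UnivOver M M₀ →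
    ∀ p : K.S M, NoSplit μ M₀ M p →
    ∃ q : K.S N, K.restrict hMN q = p ∧ NoSplit μ M₀ N q

end Splitting

theorem UnivOver.le {M N : K.Model} (h : K.UnivOver N M) : K.le M N := h.1.1

variable {NoSplit : Cardinal.{u} → (M N : K.Model) → K.S N → Prop}

theorem ExpNF.exists_noSplit_extension (mono : K.NoSplitMono μ NoSplit)
    (uniq : K.NoSplitWeakUniqueness μ NoSplit) (ext : K.NoSplitWeakExtension μ NoSplit)
    {M₀ M₁ M₂ M₃ : K.Model} {p : K.S M₂} (hp : K.ExpNF NoSplit μ M₀ M₁ M₂ p)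
    (c2 : K.card M₂ = μ) (c3 : K.card M₃ = μ) (h23 : K.le M₂ M₃) :
    ∃ q : K.S M₃, K.restrict h23 q = p ∧ NoSplit μ M₀ M₃ q := by
  obtain ⟨c0, c1, u01, h12, hns⟩ := hp
  have h01 := u01.le
  obtain ⟨q, hq1, hqns⟩ := ext M₀ M₁ M₃ (K.le_trans h12 h23) c0 c1 c3 u01
    (K.restrict h12 p) (mono M₀ M₀ M₁ M₂ (K.le_refl M₀) h01 h12 p hns)
  refine ⟨q, uniq M₀ M₁ M₂ h12 c0 c1 c2 u01 _ _
    (mono M₀ M₀ M₂ M₃ (K.le_refl M₀) (K.le_trans h01 h12) h23 q hqns) hns ?_, hqns⟩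
  rwa [K.restrict_restrict]

theorem ExpNF.noSplit_of_restrict_eq (mono : K.NoSplitMono μ NoSplit)
    (uniq : K.NoSplitWeakUniqueness μ NoSplit)
    {M₀ M₀' M₂ M₃ : K.Model} {p q : K.S M₃} (hp : K.ExpNF NoSplit μ M₀' M₂ M₃ p)
    (c3 : K.card M₃ = μ) (h00' : K.le M₀ M₀') (h23 : K.le M₂ M₃) (hq : NoSplit μ M₀ M₃ q)
    (hqp : K.restrict h23 q = K.restrict h23 p) : NoSplit μ M₀ M₃ p := by
  obtain ⟨c0', c2, u0'2, -, hns⟩ := hp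
  have h0'3 := K.le_trans u0'2.le h23
  -- `restrict (le_refl M₃) q = q` is not an axiom of `AEC`, so `q` is carried along restricted.
  have hq_eq : K.restrict (K.le_refl M₃) q = p := by
    refine uniq M₀' M₂ M₃ h23 c0' c2 c3 u0'2 _ _
      (mono M₀ M₀' M₃ M₃ h00' h0'3 (K.le_refl M₃) q hq) hns ?_
    rwa [K.restrict_restrict]
  exact hq_eq ▸ mono M₀ M₀ M₃ M₃ (K.le_refl M₀) (K.le_trans h00' h0'3) (K.le_refl M₃) q hq

end AEC

theorem expNF_transitivity_general (K : AEC.{u}) (μ : Cardinal.{u})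
    (NoSplit : Cardinal.{u} → (M N : K.Model) → K.S N → Prop)
    (split_mono : ∀ (M₀ M₀' N' N : K.Model) (h0 : K.le M₀ M₀') (h0' : K.le M₀' N')
      (hN : K.le N' N) (p : K.S N),
      NoSplit μ M₀ N p → NoSplit μ M₀' N' (K.restrict hN p))
    (weak_uniqueness : ∀ (M₀ M N : K.Model) (hMN : K.le M N),
      K.card M₀ = μ → K.card M = μ → K.card N = μ → K.UnivOver M M₀ →
      ∀ p₁ p₂ : K.S N, NoSplit μ M₀ N p₁ → NoSplit μ M₀ N p₂ →
      K.restrict hMN p₁ = K.restrict hMN p₂ → p₁ = p₂)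
    (weak_extension : ∀ (M₀ M N : K.Model) (hMN : K.le M N),
      K.card M₀ = μ → K.card M = μ → K.card N = μ → K.UnivOver M M₀ →
      ∀ p : K.S M, NoSplit μ M₀ M p →
      ∃ q : K.S N, K.restrict hMN q = p ∧ NoSplit μ M₀ N q)
    (M₀ M₀' M₁ M₂ M₃ : K.Model) (c3 : K.card M₃ = μ)
    (h12 : K.le M₁ M₂) (h23 : K.le M₂ M₃) (h00' : K.le M₀ M₀')
    (p : K.S M₃)
    (h1 : K.ExpNF NoSplit μ M₀ M₁ M₂ (K.restrict h23 p))
    (h2 : K.ExpNF NoSplit μ M₀' M₂ M₃ p) :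
    K.ExpNF NoSplit μ M₀ M₁ M₃ p := by
  obtain ⟨q, hqp, hq⟩ := h1.exists_noSplit_extension split_mono weak_uniqueness weak_extension
    h2.2.1 c3 h23
  have hp : NoSplit μ M₀ M₃ p :=
    h2.noSplit_of_restrict_eq split_mono weak_uniqueness c3 h00' h23 hq hqp
  obtain ⟨c0, c1, u01, -, -⟩ := h1
  exact ⟨c0, c1, u01, K.le_trans h12 h23, hp⟩

/-- Transitivity of explicit `μ`-nonforking: if `M₁ ≤ M₂ ≤ M₃` in
`K_μ`, `p ∈ S (M₃)`, `p ↾ M₂` explicitly does not `μ`-fork over `(M₀, M₁)`, and `p`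
explicitly does not `μ`-fork over `(M₀', M₂)` for some `M₀' ≥ M₀`, then `p`
explicitly does not `μ`-fork over `(M₀, M₁)`.  Weak uniqueness, weak extension, and
monotonicity of `μ`-nonsplitting are assumed. -/
theorem expNF_transitivity (K : AEC.{u}) (μ : Cardinal.{u}) (hμ : K.LS ≤ μ)
    (NoSplit : Cardinal.{u} → (M N : K.Model) → K.S N → Prop)
    (hamalg : K.Amalgamation {μ})
    (split_mono : ∀ (M₀ M₀' N' N : K.Model) (h0 : K.le M₀ M₀') (h0' : K.le M₀' N')
      (hN : K.le N' N) (p : K.S N),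
      NoSplit μ M₀ N p → NoSplit μ M₀' N' (K.restrict hN p))
    (weak_uniqueness : ∀ (M₀ M N : K.Model) (hMN : K.le M N),
      K.card M₀ = μ → K.card M = μ → K.card N = μ → K.UnivOver M M₀ →
      ∀ p₁ p₂ : K.S N, NoSplit μ M₀ N p₁ → NoSplit μ M₀ N p₂ →
      K.restrict hMN p₁ = K.restrict hMN p₂ → p₁ = p₂)
    (weak_extension : ∀ (M₀ M N : K.Model) (hMN : K.le M N),
      K.card M₀ = μ → K.card M = μ → K.card N = μ → K.UnivOver M M₀ →
      ∀ p : K.S M, NoSplit μ M₀ M p →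
      ∃ q : K.S N, K.restrict hMN q = p ∧ NoSplit μ M₀ N q)
    (M₀ M₀' M₁ M₂ M₃ : K.Model) (c3 : K.card M₃ = μ)
    (h12 : K.le M₁ M₂) (h23 : K.le M₂ M₃) (h00' : K.le M₀ M₀')
    (p : K.S M₃)
    (h1 : K.ExpNF NoSplit μ M₀ M₁ M₂ (K.restrict h23 p))
    (h2 : K.ExpNF NoSplit μ M₀' M₂ M₃ p) :
    K.ExpNF NoSplit μ M₀ M₁ M₃ p :=
  expNF_transitivity_general K μ NoSplit split_mono weak_uniqueness weak_extension M₀ M₀' M₁ M₂ M₃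
    c3 h12 h23 h00' p h1 h2
end

section
/- Stability transfer via nonforking: Suppose every model of K_λ embeds into a union of an increasing chain (M_i)_{i<λ} of μ⁺-model-homogeneous models of size < λ over which nonforking satisfies κ-local character with cf(λ) ≥ κ, each K_{‖M_i‖} is eventually stable, and uniqueness of nonforking extensions over μ⁺-model-homogeneous bases holds. Then K is stable in λ. -/
/-!
Abstract framework: an axiomatic presentation of an abstract elementary class (AEC)
together with its Galois types, K-embeddings, isomorphisms, universal extensions,
limit models, splitting/forking data and pre-frames, following
"Building independence relations in abstract elementary classes" (Vasey).
-/

universe u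

/-!
As `M` embeds into the resolving model `N`, it suffices to count types over `N`. Algebraic ones
are at most `‖N‖ = λ` many. By local character and monotonicity each nonalgebraic type does not
`(≥ μ)`-fork over some member `f j` of the chain with `K` stable in `‖f j‖`; by uniqueness it is
determined by its restriction to `f j`, so there are at most `‖f j‖ < λ` such types for each of
the `λ` indices `j`.
-/

open Cardinal

theorem Cardinal.mk_le_of_univ_subset_union_biUnion {α : Type u} {c : Cardinal.{u}}
    (hc : ℵ₀ ≤ c) {B : Set α} {A : Ordinal.{u} → Set α} (hB : #B ≤ c)
    (hA : ∀ j < c.ord, #(A j) ≤ c) (hcover : Set.univ ⊆ B ∪ ⋃ j < c.ord, A j) : #α ≤ c :=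
  calc #α = #(Set.univ : Set α) := mk_univ.symm
    _ ≤ #(B ∪ ⋃ j < c.ord, A j : Set α) := mk_le_mk_of_subset hcover
    _ ≤ #B + #(⋃ j < c.ord, A j : Set α) := mk_union_le _ _
    _ ≤ c + c := add_le_add hB (mk_biUnion_le_of_le_lift (by rw [card_ord]) hc A hA)
    _ = c := add_eq_self hc

namespace AEC

variable {K : AEC.{u}}

theorem mk_setOf_algebraic_le (N : K.Model) : #{p : K.S N | K.Algebraic p} ≤ K.card N :=
  mk_range_le

variable (NoSplit : Cardinal.{u} → (M N : K.Model) → K.S N → Prop) (μ : Cardinal.{u})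

theorem GeNF.mono_base {M M' N : K.Model} {p : K.S N} (hp : K.GeNF NoSplit μ M N p)
    (hMM' : K.le M M') (hM'N : K.le M' N) : K.GeNF NoSplit μ M' N p := by
  obtain ⟨-, hna, M₀, hM₀, hcard, hnf⟩ := hp
  exact ⟨hM'N, hna, M₀, K.le_trans hM₀ hMM', hcard, hnf⟩

theorem exists_geNF_of_cofinal {o : Ordinal.{u}} {f : Ordinal.{u} → K.Model} {N : K.Model}
    {P : Ordinal.{u} → Prop} (hchain : ∀ i j, i < j → j < o → K.le (f i) (f j))
    (hfN : ∀ j < o, K.le (f j) N) (hP : ∀ i < o, ∃ j, i ≤ j ∧ j < o ∧ P j) {p : K.S N}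
    (hp : ∃ i < o, K.GeNF NoSplit μ (f i) N p) : ∃ j < o, P j ∧ K.GeNF NoSplit μ (f j) N p := by
  obtain ⟨i, hi, hpi⟩ := hp
  obtain ⟨j, hij, hj, hPj⟩ := hP i hi
  refine ⟨j, hj, hPj, ?_⟩
  rcases hij.eq_or_lt with rfl | hij
  · exact hpi
  · exact hpi.mono_base NoSplit μ (hchain i j hij hj) (hfN j hj)

theorem mk_setOf_geNF_le_of_stable {M N : K.Model} (h : K.le M N) (hM : K.Stable (K.card M))
    (huniq : Set.InjOn (K.restrict h) {p | K.GeNF NoSplit μ M N p}) :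
    #{p | K.GeNF NoSplit μ M N p} ≤ K.card M :=
  calc #{p | K.GeNF NoSplit μ M N p}
      = #(K.restrict h '' {p | K.GeNF NoSplit μ M N p}) := (mk_image_eq_of_injOn _ _ huniq).symm
    _ ≤ #(K.S M) := mk_set_le _
    _ ≤ K.card M := hM M rfl

end AEC

theorem stability_transfer_general (K : AEC.{u})
    (NoSplit : Cardinal.{u} → (M N : K.Model) → K.S N → Prop)
    (μ lam : Cardinal.{u}) (hLS : K.LS ≤ μ) (hμlam : μ < lam)
    (hembtypes : ∀ M N : K.Model, K.Emb M N →
      Cardinal.mk (K.S M) ≤ Cardinal.mk (K.S N))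
    (huniq : ∀ (M N : K.Model) (h : K.le M N) (p q : K.S N), K.MHomog μ M →
      K.GeNF NoSplit μ M N p → K.GeNF NoSplit μ M N q →
      K.restrict h p = K.restrict h q → p = q)
    (hresolve : ∀ M : K.Model, K.card M = lam →
      ∃ (f : Ordinal.{u} → K.Model) (N : K.Model),
        (∀ i, i < lam.ord → K.MHomog μ (f i)) ∧
        (∀ i, i < lam.ord → K.card (f i) < lam) ∧
        (∀ i, i < lam.ord → ∃ j, i ≤ j ∧ j < lam.ord ∧ K.Stable (K.card (f j))) ∧
        (∀ i j, i < j → j < lam.ord → K.le (f i) (f j)) ∧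
        (∀ i, i < lam.ord → K.le (f i) N) ∧
        (∀ P : K.Model, (∀ i, i < lam.ord → K.le (f i) P) → K.le N P) ∧
        K.card N = lam ∧ K.Emb M N ∧
        (∀ p : K.S N, ¬ K.Algebraic p →
          ∃ i, i < lam.ord ∧ K.GeNF NoSplit μ (f i) N p)) :
    K.Stable lam := by
  intro M hM
  obtain ⟨f, N, hhom, hsmall, hstable, hchain, hfN, -, hN, hMN, hlocal⟩ := hresolve M hM
  have hlam : ℵ₀ ≤ lam := (K.aleph0_le_LS.trans hLS).trans hμlam.le
  have hcover : Set.univ ⊆ {p : K.S N | K.Algebraic p} ∪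
      ⋃ j < lam.ord, {p | K.Stable (K.card (f j)) ∧ K.GeNF NoSplit μ (f j) N p} := by
    intro p _
    by_cases halg : K.Algebraic p
    · exact Or.inl halg
    obtain ⟨j, hj, hpj⟩ := AEC.exists_geNF_of_cofinal NoSplit μ hchain hfN hstable (hlocal p halg)
    exact Or.inr (Set.mem_iUnion₂.2 ⟨j, hj, hpj⟩)
  have hpiece : ∀ j < lam.ord,
      #{p | K.Stable (K.card (f j)) ∧ K.GeNF NoSplit μ (f j) N p} ≤ lam := by
    intro j hj
    by_cases hst : K.Stable (K.card (f j))
    · simp only [hst, true_and]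
      exact (AEC.mk_setOf_geNF_le_of_stable NoSplit μ (hfN j hj) hst
        fun p hp q hq => huniq _ _ _ p q (hhom j hj) hp hq).trans (hsmall j hj).le
    · simp [hst]
  calc #(K.S M) ≤ #(K.S N) := hembtypes M N hMN
    _ ≤ lam := mk_le_of_univ_subset_union_biUnion hlam
      ((AEC.mk_setOf_algebraic_le N).trans hN.le) hpiece hcover

/-- Stability transfer via nonforking: suppose every model of
`K_lam` embeds into the union of an increasing chain `(M_i)_{i < lam}` of
`μ⁺`-model-homogeneous models of size `< lam` over which `(≥ μ)`-nonforking
satisfies `κ`-local character with `cf (lam) ≥ κ`, each `K_{‖M_i‖}` is eventually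
stable (there are unboundedly many `i` with `K` stable in `‖M_i‖`), and uniqueness
of nonforking extensions over `μ⁺`-model-homogeneous bases holds.  Then `K` is
stable in `lam`. -/
theorem stability_transfer (K : AEC.{u})
    (NoSplit : Cardinal.{u} → (M N : K.Model) → K.S N → Prop)
    (μ κ lam : Cardinal.{u}) (hLS : K.LS ≤ μ) (hμlam : μ < lam)
    (hamalg : K.Amalgamation Set.univ)
    (hcof : κ ≤ lam.ord.cof)
    (hembtypes : ∀ M N : K.Model, K.Emb M N →
      Cardinal.mk (K.S M) ≤ Cardinal.mk (K.S N))
    (huniq : ∀ (M N : K.Model) (h : K.le M N) (p q : K.S N), K.MHomog μ M →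
      K.GeNF NoSplit μ M N p → K.GeNF NoSplit μ M N q →
      K.restrict h p = K.restrict h q → p = q)
    (hresolve : ∀ M : K.Model, K.card M = lam →
      ∃ (f : Ordinal.{u} → K.Model) (N : K.Model),
        (∀ i, i < lam.ord → K.MHomog μ (f i)) ∧
        (∀ i, i < lam.ord → K.card (f i) < lam) ∧
        (∀ i, i < lam.ord → ∃ j, i ≤ j ∧ j < lam.ord ∧ K.Stable (K.card (f j))) ∧
        (∀ i j, i < j → j < lam.ord → K.le (f i) (f j)) ∧
        (∀ i, i < lam.ord → K.le (f i) N) ∧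
        (∀ P : K.Model, (∀ i, i < lam.ord → K.le (f i) P) → K.le N P) ∧
        K.card N = lam ∧ K.Emb M N ∧
        (∀ p : K.S N, ¬ K.Algebraic p →
          ∃ i, i < lam.ord ∧ K.GeNF NoSplit μ (f i) N p)) :
    K.Stable lam :=
  stability_transfer_general K NoSplit μ lam hLS hμlam hembtypes huniq hresolve
end
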